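/- One-step induction for MinPop matching: define h(u,c) = g(u ++ [c]) and H(u,c) = G(u ++ [c]) for u on the trie. Then for any string w with last character c and prefix w' (so w = w' ++ [c]): if g(w') = none then g(w) = none and G(w) = G(w'); and if g(w') = some u, then g(w) = h(u,c) and G(w) = G(w') ++ H(u,c). -/

import Mathlib

variable {α : Type*} [DecidableEq α]

/-- The longest nonempty prefix of `w` that belongs to `V` (or `[]` if none exists). -/
def maxPref (V : Finset (List α)) (w : List α) : List α :=
  ((w.inits.filter (fun p => decide (p ∈ V ∧ p ≠ []))).getLast?).getD []

/-- The suffix `q_w` of `w` obtained by removing the prefix `p_w`. -/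
def restSuffix (V : Finset (List α)) (w : List α) : List α :=
  w.drop (maxPref V w).length

/-- MaxMatch tokenization; `none` encodes the failure output `[UNK]`. -/
def maxMatch (V : Finset (List α)) (w : List α) : Option (List (List α)) :=
  if hw : w = [] then some []
  else if hp : maxPref V w = [] then none
  else
    match maxMatch V (w.drop (maxPref V w).length) with
    | none => none
    | some ts => some (maxPref V w :: ts)
  termination_by w.length
  decreasing_by
    simp only [List.length_drop]
    have h1 : 0 < (maxPref V w).length := List.length_pos_iff.mpr hp
    have h2 : 0 < w.length := List.length_pos_iff.mpr hw
    omega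

/-- `w` is "on the trie" built from `V`: it is `ε` or a prefix of a vocabulary token. -/
def OnTrie (V : Finset (List α)) (w : List α) : Prop :=
  w = [] ∨ ∃ t ∈ V, w <+: t

instance (V : Finset (List α)) (w : List α) : Decidable (OnTrie V w) := by
  unfold OnTrie; infer_instance

/-- MinPop matching: `(g w, G w)`. -/
def minPop (V : Finset (List α)) (w : List α) : Option (List α) × List (List α) :=
  if hT : OnTrie V w then (some w, [])
  else if hp : maxPref V w = [] then (none, [])
  else
    let r := minPop V (w.drop (maxPref V w).length)
    (r.1, maxPref V w :: r.2)
  termination_by w.length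
  decreasing_by
    simp only [List.length_drop]
    have hw : w ≠ [] := fun h => hT (Or.inl h)
    have h1 : 0 < (maxPref V w).length := List.length_pos_iff.mpr hp
    have h2 : 0 < w.length := List.length_pos_iff.mpr hw
    omega

/-- Failure link `f(u)`. -/
def fLink (V : Finset (List α)) (u : List α) : Option (List α) :=
  if maxPref V u = [] then none else (minPop V (restSuffix V u)).1

/-- Failure pops `F(u)`. -/
def fPops (V : Finset (List α)) (u : List α) : List (List α) :=
  if maxPref V u = [] then [] else maxPref V u :: (minPop V (restSuffix V u)).2

/-!
Appending `c` to a word `w` that is not on the trie does not change `p_w` (the new longest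
candidate `w ++ [c]` is not in `V`), so MinPop pops the same tokens and recurses on `q_w ++ [c]`.
Induction along the recursion of `minPop` thus reduces the claim to the case where `w` is on
the trie, where `g w = some w`, `G w = []` and the claim is the definition of `h` and `H`
(when `p_w = ε`, both `w` and `w ++ [c]` fail with no pops).
-/

theorem maxPref_prefix (V : Finset (List α)) (w : List α) : maxPref V w <+: w := by
  unfold maxPref
  rcases hl : (w.inits.filter (fun p => decide (p ∈ V ∧ p ≠ []))).getLast? with _ | p
  · exact List.nil_prefix
  · have hmem := List.mem_of_getLast? hl
    exact (List.mem_inits _ _).mp (List.mem_filter.mp hmem).1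

omit [DecidableEq α] in
theorem OnTrie.of_prefix {V : Finset (List α)} {u w : List α} (huw : u <+: w)
    (hw : OnTrie V w) : OnTrie V u := by
  rcases hw with rfl | ⟨t, ht, hwt⟩
  · exact Or.inl (List.prefix_nil.mp huw)
  · exact Or.inr ⟨t, ht, huw.trans hwt⟩

theorem maxPref_append_singleton {V : Finset (List α)} {w : List α} (c : α)
    (hw : ¬ OnTrie V w) : maxPref V (w ++ [c]) = maxPref V w := by
  have hwc : w ++ [c] ∉ V := fun hV => hw (Or.inr ⟨w ++ [c], hV, w.prefix_append [c]⟩)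
  simp [maxPref, List.inits_append, hwc]

theorem minPop_of_onTrie {V : Finset (List α)} {w : List α} (hw : OnTrie V w) :
    minPop V w = (some w, []) := by
  rw [minPop, dif_pos hw]

theorem minPop_of_maxPref_eq_nil {V : Finset (List α)} {w : List α} (hw : ¬ OnTrie V w)
    (hp : maxPref V w = []) : minPop V w = (none, []) := by
  rw [minPop, dif_neg hw, dif_pos hp]

theorem minPop_of_maxPref_ne_nil {V : Finset (List α)} {w : List α} (hw : ¬ OnTrie V w)
    (hp : maxPref V w ≠ []) :
    minPop V w =
      ((minPop V (restSuffix V w)).1, maxPref V w :: (minPop V (restSuffix V w)).2) := by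
  rw [minPop, dif_neg hw, dif_neg hp]
  rfl

/-- The paper's `h(u, c)` and `H(u, c)`, as a transition on MinPop results `r = (g w, G w)`. -/
def minPopStep (V : Finset (List α)) (r : Option (List α) × List (List α)) (c : α) :
    Option (List α) × List (List α) :=
  match r.1 with
  | none => r
  | some u => ((minPop V (u ++ [c])).1, r.2 ++ (minPop V (u ++ [c])).2)

theorem minPopStep_cons (V : Finset (List α)) (r : Option (List α) × List (List α))
    (p : List α) (c : α) :
    minPopStep V (r.1, p :: r.2) c = ((minPopStep V r c).1, p :: (minPopStep V r c).2) := by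
  rcases r with ⟨_ | u, ts⟩ <;> rfl

theorem minPop_append_singleton (V : Finset (List α)) (w : List α) (c : α) :
    minPop V (w ++ [c]) = minPopStep V (minPop V w) c := by
  induction w using minPop.induct V with
  | case1 w hw =>
    rw [minPop_of_onTrie hw]
    rfl
  | case2 w hw hp =>
    have hwc : ¬ OnTrie V (w ++ [c]) := fun h => hw (h.of_prefix (w.prefix_append [c]))
    rw [minPop_of_maxPref_eq_nil hw hp,
      minPop_of_maxPref_eq_nil hwc ((maxPref_append_singleton c hw).trans hp)]
    rfl
  | case3 w hw hp ih =>
    have hwc : ¬ OnTrie V (w ++ [c]) := fun h => hw (h.of_prefix (w.prefix_append [c]))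
    have hpc := maxPref_append_singleton c hw
    have hrest : restSuffix V (w ++ [c]) = restSuffix V w ++ [c] := by
      rw [restSuffix, restSuffix, hpc, List.drop_append_of_le_length (maxPref_prefix V w).length_le]
    rw [minPop_of_maxPref_ne_nil hwc (hpc ▸ hp), minPop_of_maxPref_ne_nil hw hp, minPopStep_cons,
      hrest, restSuffix, ih, hpc]

theorem stmt10_general (V : Finset (List α))
    (w' : List α) (c : α) :
    ((minPop V w').1 = none →
      (minPop V (w' ++ [c])).1 = none ∧
      (minPop V (w' ++ [c])).2 = (minPop V w').2) ∧
    (∀ u, (minPop V w').1 = some u →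
      (minPop V (w' ++ [c])).1 = (minPop V (u ++ [c])).1 ∧
      (minPop V (w' ++ [c])).2 = (minPop V w').2 ++ (minPop V (u ++ [c])).2) := by
  rw [minPop_append_singleton]
  refine ⟨fun hnone => ?_, fun u hu => ?_⟩
  · simp [minPopStep, hnone]
  · simp [minPopStep, hu]

/-- one-step induction for MinPop matching, with
`h(u,c) = g(u ++ [c])` and `H(u,c) = G(u ++ [c])`: for `w = w' ++ [c]`,
if `g(w') = none` then `g(w) = none` and `G(w) = G(w')`; and if `g(w') = some u`
then `g(w) = h(u,c)` and `G(w) = G(w') ++ H(u,c)`. -/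
theorem stmt10 (V : Finset (List α)) (hV : ∀ t ∈ V, t ≠ [])
    (w' : List α) (c : α) :
    ((minPop V w').1 = none →
      (minPop V (w' ++ [c])).1 = none ∧
      (minPop V (w' ++ [c])).2 = (minPop V w').2) ∧
    (∀ u, (minPop V w').1 = some u →
      (minPop V (w' ++ [c])).1 = (minPop V (u ++ [c])).1 ∧
      (minPop V (w' ++ [c])).2 = (minPop V w').2 ++ (minPop V (u ++ [c])).2) :=
  stmt10_general V w' c
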